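/- Let p_v ≥ 1, d > 0, R ≥ 0 be real numbers and let p_c satisfy 1 − 1/p_v ≤ p_c < 1. If 1/(1+p_v·p_c) < R/d < 1/p_v, then the set of Nash equilibria of the two-miner mining game is exactly { (1,1), (0,0), (g1(R/d), g2(R/d)) }: both miners not participating, both miners participating, and the mixed equilibrium in which miner 1 does not participate with probability g1(R/d) and miner 2 does not participate with probability g2(R/d). -/

import Mathlib

/-- Expected payoff of miner 1; `x1`, `x2` are the probabilities that
miners 1 and 2 do NOT participate in mining. -/
noncomputable def u1 (pv pc d R x1 x2 : ℝ) : ℝ :=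
  (1 - x1) * (x2 * (R - d) +
    (1 - x2) * (1 / (1 + pv * pc)) * (R - d / (1 + pv * pc)))

/-- Expected payoff of miner 2. -/
noncomputable def u2 (pv pc d R x1 x2 : ℝ) : ℝ :=
  (1 - x2) * (x1 * (R - d / pv) +
    (1 - x1) * (pv * pc / (1 + pv * pc)) * (R - d * pc / (1 + pv * pc)))

/-- `p = (x1, x2) ∈ [0,1]²` is a (mixed) Nash equilibrium of the
two-miner mining game. -/
def IsNashEq (pv pc d R : ℝ) (p : ℝ × ℝ) : Prop :=
  p.1 ∈ Set.Icc (0 : ℝ) 1 ∧ p.2 ∈ Set.Icc (0 : ℝ) 1 ∧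
  (∀ y ∈ Set.Icc (0 : ℝ) 1, u1 pv pc d R p.1 p.2 ≥ u1 pv pc d R y p.2) ∧
  (∀ y ∈ Set.Icc (0 : ℝ) 1, u2 pv pc d R p.1 p.2 ≥ u2 pv pc d R p.1 y)

/-- The threshold function `g1`. -/
noncomputable def g1 (pv pc z : ℝ) : ℝ :=
  pv * pc * (z - pc / (1 + pv * pc)) / ((2 * pv * pc + 1) / (pv * (1 + pv * pc)) - z)

/-- The threshold function `g2`. -/
noncomputable def g2 (pv pc z : ℝ) : ℝ :=
  (z - 1 / (1 + pv * pc)) / (pv * pc * ((2 + pv * pc) / (1 + pv * pc) - z))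

/-!
Each miner's payoff is `1 - x_k` times its expected gain from mining, an affine function of the
other miner's abstention probability. In the middle reward range this gain is negative when the
other miner abstains and positive when it mines, for both miners. A miner whose gain has a strict
sign plays a pure strategy, and the other miner's pure best reply then matches it; otherwise both
gains vanish, which pins each mixed strategy down as the zero of the opponent's affine gain.
Rewritten in terms of `R / d`, these zeros are `g1` and `g2`.
-/

open Set

lemma isMaxOn_one_sub_mul_iff {a x : ℝ} (hx : x ∈ Icc 0 1) :
    IsMaxOn (fun y => (1 - y) * a) (Icc 0 1) x ↔ (0 < a → x = 0) ∧ (a < 0 → x = 1) := by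
  rw [isMaxOn_iff]
  constructor
  · intro h
    have h0 := h 0 ⟨le_rfl, zero_le_one⟩
    have h1 := h 1 ⟨zero_le_one, le_rfl⟩
    exact ⟨fun ha => by nlinarith [hx.1], fun ha => by nlinarith [hx.2]⟩
  · rintro ⟨hpos, hneg⟩ y hy
    rcases lt_trichotomy a 0 with ha | rfl | ha
    · rw [hneg ha]; nlinarith [hy.2]
    · simp
    · rw [hpos ha]; nlinarith [hy.1]

section ParticipationGame

variable {α β γ δ : ℝ}

/-- Nash equilibria of the two-player game in which player `k` abstains with probability `p.k`,
and a participating player earns `α` (player 1) or `γ` (player 2) if the other abstains and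
`β` (player 1) or `δ` (player 2) if the other participates. -/
def IsParticipationNashEq (α β γ δ : ℝ) (p : ℝ × ℝ) : Prop :=
  p.1 ∈ Icc 0 1 ∧ p.2 ∈ Icc 0 1 ∧
    IsMaxOn (fun y => (1 - y) * (p.2 * α + (1 - p.2) * β)) (Icc 0 1) p.1 ∧
    IsMaxOn (fun y => (1 - y) * (p.1 * γ + (1 - p.1) * δ)) (Icc 0 1) p.2

lemma mix_eq_zero_iff (hα : α < 0) (hβ : 0 < β) {t : ℝ} :
    t * α + (1 - t) * β = 0 ↔ t = β / (β - α) := by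
  rw [eq_div_iff (by linarith)]
  constructor <;> intro h <;> linarith

lemma div_sub_mem_Ioo (hα : α < 0) (hβ : 0 < β) : β / (β - α) ∈ Ioo 0 1 :=
  ⟨div_pos hβ (by linarith), (div_lt_one (by linarith)).mpr (by linarith)⟩

lemma IsParticipationNashEq.eq_or_eq_or_eq (hα : α < 0) (hβ : 0 < β) (hγ : γ < 0) (hδ : 0 < δ)
    {p : ℝ × ℝ} (hp : IsParticipationNashEq α β γ δ p) :
    p = (1, 1) ∨ p = (0, 0) ∨ p = (δ / (δ - γ), β / (β - α)) := by
  obtain ⟨x1, x2⟩ := p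
  obtain ⟨hx1, hx2, H1, H2⟩ := hp
  rw [isMaxOn_one_sub_mul_iff hx1] at H1
  rw [isMaxOn_one_sub_mul_iff hx2] at H2
  rcases lt_trichotomy (x2 * α + (1 - x2) * β) 0 with hA | hA | hA
  · obtain rfl := H1.2 hA
    obtain rfl := H2.2 (by linarith)
    exact Or.inl rfl
  · obtain rfl := (mix_eq_zero_iff hα hβ).mp hA
    obtain ⟨hx2_pos, hx2_lt_one⟩ := div_sub_mem_Ioo hα hβ
    -- player 2 mixes strictly, so they must be indifferent
    have hB : x1 * γ + (1 - x1) * δ = 0 := by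
      rcases lt_trichotomy (x1 * γ + (1 - x1) * δ) 0 with hB | hB | hB
      · linarith [H2.2 hB]
      · exact hB
      · linarith [H2.1 hB]
    rw [(mix_eq_zero_iff hγ hδ).mp hB]
    exact Or.inr (Or.inr rfl)
  · obtain rfl := H1.1 hA
    obtain rfl := H2.1 (by linarith)
    exact Or.inr (Or.inl rfl)

theorem setOf_isParticipationNashEq (hα : α < 0) (hβ : 0 < β) (hγ : γ < 0) (hδ : 0 < δ) :
    {p | IsParticipationNashEq α β γ δ p} = {(1, 1), (0, 0), (δ / (δ - γ), β / (β - α))} := by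
  refine Subset.antisymm (fun p hp => hp.eq_or_eq_or_eq hα hβ hγ hδ) ?_
  have h0 : (0 : ℝ) ∈ Icc 0 1 := ⟨le_rfl, zero_le_one⟩
  have h1 : (1 : ℝ) ∈ Icc 0 1 := ⟨zero_le_one, le_rfl⟩
  rintro p (rfl | rfl | rfl)
  · refine ⟨h1, h1, (isMaxOn_one_sub_mul_iff h1).mpr ?_, (isMaxOn_one_sub_mul_iff h1).mpr ?_⟩ <;>
      exact ⟨fun h => by linarith, fun _ => rfl⟩
  · refine ⟨h0, h0, (isMaxOn_one_sub_mul_iff h0).mpr ?_, (isMaxOn_one_sub_mul_iff h0).mpr ?_⟩ <;>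
      exact ⟨fun _ => rfl, fun h => by linarith⟩
  · have ht1 := Ioo_subset_Icc_self (div_sub_mem_Ioo hγ hδ)
    have ht2 := Ioo_subset_Icc_self (div_sub_mem_Ioo hα hβ)
    have hA := (mix_eq_zero_iff hα hβ).mpr rfl
    have hB := (mix_eq_zero_iff hγ hδ).mpr rfl
    refine ⟨ht1, ht2, (isMaxOn_one_sub_mul_iff ht1).mpr ?_, (isMaxOn_one_sub_mul_iff ht2).mpr ?_⟩
    · exact ⟨fun h => (h.ne' hA).elim, fun h => (h.ne hA).elim⟩
    · exact ⟨fun h => (h.ne' hB).elim, fun h => (h.ne hB).elim⟩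

end ParticipationGame

section MiningGame

variable {pv pc d R : ℝ}

-- The miners' expected profits from mining when the other miner mines as well.
noncomputable def bothMineGain1 (pv pc d R : ℝ) : ℝ :=
  1 / (1 + pv * pc) * (R - d / (1 + pv * pc))

noncomputable def bothMineGain2 (pv pc d R : ℝ) : ℝ :=
  pv * pc / (1 + pv * pc) * (R - d * pc / (1 + pv * pc))

lemma isNashEq_iff_isParticipationNashEq {p : ℝ × ℝ} :
    IsNashEq pv pc d R p ↔
      IsParticipationNashEq (R - d) (bothMineGain1 pv pc d R) (R - d / pv)
        (bothMineGain2 pv pc d R) p := by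
  simp only [IsNashEq, IsParticipationNashEq, isMaxOn_iff, u1, u2, bothMineGain1, bothMineGain2,
    mul_assoc, ge_iff_le]

-- Both sides are the same quotient, scaled by `(1 + pv * pc) / d`.
lemma g1_div_eq (hpv : pv ≠ 0) (hs : 1 + pv * pc ≠ 0) (hd : d ≠ 0) :
    g1 pv pc (R / d) =
      bothMineGain2 pv pc d R / (bothMineGain2 pv pc d R - (R - d / pv)) := by
  rw [g1, ← mul_div_mul_right (bothMineGain2 pv pc d R) _ (div_ne_zero hs hd)]
  unfold bothMineGain2
  congr 1
  · field_simp
  · field_simp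
    ring

lemma g2_div_eq (hs : 1 + pv * pc ≠ 0) (hd : d ≠ 0) :
    g2 pv pc (R / d) = bothMineGain1 pv pc d R / (bothMineGain1 pv pc d R - (R - d)) := by
  rw [g2, ← mul_div_mul_right (bothMineGain1 pv pc d R) _ (div_ne_zero hs hd)]
  unfold bothMineGain1
  congr 1
  · field_simp
  · field_simp
    ring

lemma bothMineGain1_pos (hs : 0 < 1 + pv * pc) (hd : 0 < d) (h : 1 / (1 + pv * pc) < R / d) :
    0 < bothMineGain1 pv pc d R := by
  rw [div_lt_div_iff₀ hs hd] at h
  exact mul_pos (one_div_pos.mpr hs) (sub_pos.mpr ((div_lt_iff₀ hs).mpr (by linarith)))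

lemma bothMineGain2_pos (hq : 0 < pv * pc) (hpc : pc < 1) (hd : 0 < d)
    (h : 1 / (1 + pv * pc) < R / d) : 0 < bothMineGain2 pv pc d R := by
  have hs : 0 < 1 + pv * pc := by linarith
  rw [div_lt_div_iff₀ hs hd] at h
  refine mul_pos (div_pos hq hs) (sub_pos.mpr ((div_lt_iff₀ hs).mpr ?_))
  nlinarith

end MiningGame

theorem nash_eq_case2_middle_reward_general
    (pv pc d R : ℝ) (hpv : 1 ≤ pv) (hpc1 : 1 - 1 / pv ≤ pc) (hpc2 : pc < 1)
    (hd : 0 < d)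
    (h1 : 1 / (1 + pv * pc) < R / d) (h2 : R / d < 1 / pv) :
    {p : ℝ × ℝ | IsNashEq pv pc d R p}
      = {((1 : ℝ), (1 : ℝ)), ((0 : ℝ), (0 : ℝ)),
          (g1 pv pc (R / d), g2 pv pc (R / d))} := by
  have hpv0 : 0 < pv := by linarith
  have hq_ge : pv - 1 ≤ pv * pc := by
    have := mul_le_mul_of_nonneg_left hpc1 hpv0.le
    rwa [mul_sub, mul_one_div_cancel hpv0.ne', mul_one] at this
  have hs : 0 < 1 + pv * pc := by linarith
  have hq : 0 < pv * pc := by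
    have := (one_div_lt_one_div hs hpv0).mp (h1.trans h2)
    linarith
  have hRd : R < d := (div_lt_one hd).mp (h2.trans_le ((div_le_one hpv0).mpr hpv))
  have hR_pv : R - d / pv < 0 := by
    rw [div_lt_div_iff₀ hd hpv0] at h2
    rw [sub_neg, lt_div_iff₀ hpv0]
    linarith
  rw [g1_div_eq hpv0.ne' hs.ne' hd.ne', g2_div_eq hs.ne' hd.ne',
    ← setOf_isParticipationNashEq (by linarith) (bothMineGain1_pos hs hd h1) hR_pv
      (bothMineGain2_pos hq hpc2 hd h1)]
  ext p
  exact isNashEq_iff_isParticipationNashEq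

/-- For `1 - 1/pv ≤ pc < 1`: if `1/(1 + pv pc) < R/d < 1/pv`, the Nash
equilibria are exactly `(1,1)`, `(0,0)` and the mixed one
`(g1(R/d), g2(R/d))`. -/
theorem nash_eq_case2_middle_reward
    (pv pc d R : ℝ) (hpv : 1 ≤ pv) (hpc1 : 1 - 1 / pv ≤ pc) (hpc2 : pc < 1)
    (hd : 0 < d) (hR : 0 ≤ R)
    (h1 : 1 / (1 + pv * pc) < R / d) (h2 : R / d < 1 / pv) :
    {p : ℝ × ℝ | IsNashEq pv pc d R p}
      = {((1 : ℝ), (1 : ℝ)), ((0 : ℝ), (0 : ℝ)),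
          (g1 pv pc (R / d), g2 pv pc (R / d))} :=
  nash_eq_case2_middle_reward_general pv pc d R hpv hpc1 hpc2 hd h1 h2
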